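/- arXiv:1206.5689 — 5 statements merged into one kernel-verified Lean document; each statement's English description precedes it below -/
import Mathlib

section
/- For any family of three or more half-planes in the plane, there is a subset T of the family such that no point lies in exactly the half-planes of T. -/
/-- A (closed) half-plane in the plane. -/
structure HalfPlane where
  a : ℝ × ℝ
  b : ℝ
  ha : a ≠ 0

/-- The region covered by a half-plane. -/
def HalfPlane.carrier (h : HalfPlane) : Set (ℝ × ℝ) :=
  {x : ℝ × ℝ | h.a.1 * x.1 + h.a.2 * x.2 ≤ h.b}

/-- The boundary line of a half-plane. -/
def HalfPlane.line (h : HalfPlane) : Set (ℝ × ℝ) :=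
  {x : ℝ × ℝ | h.a.1 * x.1 + h.a.2 * x.2 = h.b}

/-- Three vectors in the plane are linearly dependent (hand-rolled). -/
lemma dep2 (u v w : ℝ × ℝ) (hu : u ≠ 0) :
    ∃ c0 c1 c2 : ℝ, ¬(c0 = 0 ∧ c1 = 0 ∧ c2 = 0) ∧
      c0 * u.1 + c1 * v.1 + c2 * w.1 = 0 ∧
      c0 * u.2 + c1 * v.2 + c2 * w.2 = 0 := by
  by_cases hd : u.1 * v.2 - u.2 * v.1 = 0
  · by_cases h1 : u.1 = 0
    · have h2 : u.2 ≠ 0 := by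
        intro h
        exact hu (Prod.ext h1 h)
      exact ⟨v.2, -u.2, 0, fun h => h2 (by linarith [h.2.1]),
        by rw [h1] at hd ⊢; nlinarith, by ring⟩
    · exact ⟨v.1, -u.1, 0, fun h => h1 (by linarith [h.2.1]),
        by ring, by nlinarith⟩
  · exact ⟨v.2 * w.1 - v.1 * w.2, u.1 * w.2 - u.2 * w.1, -(u.1 * v.2 - u.2 * v.1),
      fun h => hd (by linarith [h.2.2]), by ring, by ring⟩

lemma t3 (c s : ℝ) (h : s ≤ 0 ↔ 0 ≤ c) : c * s ≤ 0 := by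
  by_cases hs : s ≤ 0
  · exact mul_nonpos_of_nonneg_of_nonpos (h.mp hs) hs
  · push_neg at hs
    have hc : c < 0 := by by_contra hc; push_neg at hc; exact hs.not_ge (h.mpr hc)
    nlinarith

lemma t3' (c s : ℝ) (h : s ≤ 0 ↔ 0 ≤ c) (hc : c < 0) : c * s < 0 := by
  have hs : ¬ s ≤ 0 := fun hs => absurd (h.mp hs) (not_le.mpr hc)
  push_neg at hs
  nlinarith

lemma t2 (c s : ℝ) (h : s ≤ 0 ↔ c ≤ 0) : 0 ≤ c * s := by
  by_cases hs : s ≤ 0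
  · have := h.mp hs; nlinarith
  · push_neg at hs
    have hc : 0 < c := by by_contra hc; push_neg at hc; exact hs.not_ge (h.mpr hc)
    nlinarith

lemma t2' (c s : ℝ) (h : s ≤ 0 ↔ c ≤ 0) (hc : 0 < c) : 0 < c * s := by
  have hs : ¬ s ≤ 0 := fun hs => absurd (h.mp hs) (not_le.mpr hc)
  push_neg at hs
  nlinarith

/-- For any family of three or more half-planes, some subset `T` of the family is
realized by no point of the plane. -/
theorem stmt4 (n : ℕ) (hn : 3 ≤ n) (H : Fin n → HalfPlane) :
    ∃ T : Set (Fin n), ¬ ∃ x : ℝ × ℝ, {i : Fin n | x ∈ (H i).carrier} = T := by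
  set i0 : Fin n := ⟨0, by omega⟩ with hi0
  set i1 : Fin n := ⟨1, by omega⟩ with hi1
  set i2 : Fin n := ⟨2, by omega⟩ with hi2
  have ne01 : i0 ≠ i1 := Fin.ne_of_val_ne (by norm_num)
  have ne02 : i0 ≠ i2 := Fin.ne_of_val_ne (by norm_num)
  have ne12 : i1 ≠ i2 := Fin.ne_of_val_ne (by norm_num)
  -- the "slack" function of each of the three half-planes
  set g : Fin n → ℝ × ℝ → ℝ :=
    fun i x => (H i).a.1 * x.1 + (H i).a.2 * x.2 - (H i).b with hg
  have hmem : ∀ (i : Fin n) (x : ℝ × ℝ), x ∈ (H i).carrier ↔ g i x ≤ 0 := by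
    intro i x
    simp only [HalfPlane.carrier, Set.mem_setOf_eq, hg]
    constructor <;> intro h <;> linarith
  -- reduction: it suffices to find an unrealizable sign pattern on the three half-planes
  have hred : ∀ P0 P1 P2 : Prop,
      (∀ x : ℝ × ℝ, ¬((g i0 x ≤ 0 ↔ P0) ∧ (g i1 x ≤ 0 ↔ P1) ∧ (g i2 x ≤ 0 ↔ P2))) →
      ∃ T : Set (Fin n), ¬ ∃ x : ℝ × ℝ, {i : Fin n | x ∈ (H i).carrier} = T := by
    intro P0 P1 P2 h
    refine ⟨{i | (i = i0 ∧ P0) ∨ (i = i1 ∧ P1) ∨ (i = i2 ∧ P2)}, ?_⟩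
    rintro ⟨x, hx⟩
    apply h x
    have m0 := Set.ext_iff.mp hx i0
    have m1 := Set.ext_iff.mp hx i1
    have m2 := Set.ext_iff.mp hx i2
    simp only [Set.mem_setOf_eq, hmem] at m0 m1 m2
    refine ⟨m0.trans ?_, m1.trans ?_, m2.trans ?_⟩
    · simp [ne01, ne02]
    · simp [Ne.symm ne01, ne12]
    · simp [Ne.symm ne02, Ne.symm ne12]
  -- linear dependence of the three normal vectors
  obtain ⟨c0, c1, c2, hc, e1, e2⟩ :=
    dep2 (H i0).a (H i1).a (H i2).a (H i0).ha
  set K : ℝ := -(c0 * (H i0).b + c1 * (H i1).b + c2 * (H i2).b) with hK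
  have key : ∀ x : ℝ × ℝ, c0 * g i0 x + c1 * g i1 x + c2 * g i2 x = K := by
    intro x
    simp only [hg, hK]
    linear_combination x.1 * e1 + x.2 * e2
  rcases lt_trichotomy K 0 with hK0 | hK0 | hK0
  · -- K < 0 : pattern "c ≤ 0"
    apply hred (c0 ≤ 0) (c1 ≤ 0) (c2 ≤ 0)
    rintro x ⟨h0, h1, h2⟩
    have := key x
    have := t2 c0 _ h0
    have := t2 c1 _ h1
    have := t2 c2 _ h2
    linarith
  · -- K = 0 : there is a nonzero coefficient
    have hone : c0 ≠ 0 ∨ c1 ≠ 0 ∨ c2 ≠ 0 := by tauto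
    rcases hone with hj | hj | hj <;> rcases hj.lt_or_gt with hj | hj
    · apply hred (0 ≤ c0) (0 ≤ c1) (0 ≤ c2)
      rintro x ⟨h0, h1, h2⟩
      have := key x
      have := t3' c0 _ h0 hj
      have := t3 c1 _ h1
      have := t3 c2 _ h2
      linarith
    · apply hred (c0 ≤ 0) (c1 ≤ 0) (c2 ≤ 0)
      rintro x ⟨h0, h1, h2⟩
      have := key x
      have := t2' c0 _ h0 hj
      have := t2 c1 _ h1
      have := t2 c2 _ h2
      linarith
    · apply hred (0 ≤ c0) (0 ≤ c1) (0 ≤ c2)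
      rintro x ⟨h0, h1, h2⟩
      have := key x
      have := t3 c0 _ h0
      have := t3' c1 _ h1 hj
      have := t3 c2 _ h2
      linarith
    · apply hred (c0 ≤ 0) (c1 ≤ 0) (c2 ≤ 0)
      rintro x ⟨h0, h1, h2⟩
      have := key x
      have := t2 c0 _ h0
      have := t2' c1 _ h1 hj
      have := t2 c2 _ h2
      linarith
    · apply hred (0 ≤ c0) (0 ≤ c1) (0 ≤ c2)
      rintro x ⟨h0, h1, h2⟩
      have := key x
      have := t3 c0 _ h0
      have := t3 c1 _ h1
      have := t3' c2 _ h2 hj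
      linarith
    · apply hred (c0 ≤ 0) (c1 ≤ 0) (c2 ≤ 0)
      rintro x ⟨h0, h1, h2⟩
      have := key x
      have := t2 c0 _ h0
      have := t2 c1 _ h1
      have := t2' c2 _ h2 hj
      linarith
  · -- K > 0 : pattern "0 ≤ c" (terms nonpositive)
    apply hred (0 ≤ c0) (0 ≤ c1) (0 ≤ c2)
    rintro x ⟨h0, h1, h2⟩
    have := key x
    have := t3 c0 _ h0
    have := t3 c1 _ h1
    have := t3 c2 _ h2
    linarith
end

section
/- Triangle confinement lemma: let a, b, c be vertices of a triangle in counterclockwise order in a simple polygon P, and suppose there exists a point w ∈ H⁺(b,a) ∩ H⁻(c,b) that sees both a and c. Then every point v ∈ H⁺(b,a) that sees a and c but does not see b lies in H⁻(c,b). -/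
open Bornology in
/-- A simple polygon: the closed region bounded by a simple closed polygonal curve,
given by its cyclically ordered vertices. `carrier` consists of the polygonal curve
together with all bounded connected components of its complement. -/
structure SimplePolygon where
  n : ℕ
  three_le : 3 ≤ n
  vtx : Fin n → ℝ × ℝ
  inj : Function.Injective vtx
  adj : ∀ i : Fin n,
    segment ℝ (vtx i) (vtx (finRotate n i)) ∩
      segment ℝ (vtx (finRotate n i)) (vtx (finRotate n (finRotate n i)))
    = {vtx (finRotate n i)}
  nonadj : ∀ i j : Fin n, j ≠ i → j ≠ finRotate n i → i ≠ finRotate n j →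
    segment ℝ (vtx i) (vtx (finRotate n i)) ∩ segment ℝ (vtx j) (vtx (finRotate n j)) = ∅
  carrier : Set (ℝ × ℝ)
  carrier_def : carrier =
    {x : ℝ × ℝ |
      IsBounded (connectedComponentIn (⋃ i : Fin n, segment ℝ (vtx i) (vtx (finRotate n i)))ᶜ x)}

/-- The visibility region of a point `v` in a simple polygon `P`. -/
def vis (P : SimplePolygon) (v : ℝ × ℝ) : Set (ℝ × ℝ) :=
  {x ∈ P.carrier | segment ℝ x v ⊆ P.carrier}

/-- The open half-plane to the left of the directed line from `p` through `q`. -/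
def Hplus (p q : ℝ × ℝ) : Set (ℝ × ℝ) :=
  {x | 0 < (q.1 - p.1) * (x.2 - p.2) - (q.2 - p.2) * (x.1 - p.1)}

/-- The open half-plane to the right of the directed line from `p` through `q`. -/
def Hminus (p q : ℝ × ℝ) : Set (ℝ × ℝ) :=
  {x | (q.1 - p.1) * (x.2 - p.2) - (q.2 - p.2) * (x.1 - p.1) < 0}

/-!
Suppose `v` sees `a` and `c` but lies on the closed side of the line `cb` away from `w`. Then the
segment `vb` lies in the triangle `cav`, strictly on `v`'s side of the line `ca`. The four
visibility segments `wa`, `wc`, `va`, `vc` bound a bounded region containing `vb`: the union of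
the triangles `cav` and `acw` when `w` is across the line `ca` from `v`; the triangle `cav`,
whose edge `ca` lies on `wc`, when `w` is on that line; and the triangle `cav` with the open
cone at `w` spanned by `a` and `c` cut out when `w` is on `v`'s side, in which case the line
`cb` separates `vb` from the part of that cone on `v`'s side of `ca`. A bounded region whose
frontier lies in `P` lies in `P`: a point outside `P` lies in an unbounded component of the
complement of the boundary, and that component can leave the region only through its frontier.
Hence `v` sees `b`.
-/

open Bornology Set

/-- Twice the signed area of the triangle `p q x`. -/
def orient (p q x : ℝ × ℝ) : ℝ :=
  (q.1 - p.1) * (x.2 - p.2) - (q.2 - p.2) * (x.1 - p.1)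

section Orient

variable {p q r u w x : ℝ × ℝ}

theorem mem_Hplus : x ∈ Hplus p q ↔ 0 < orient p q x := Iff.rfl

theorem orient_rotate (p q r : ℝ × ℝ) : orient p q r = orient q r p := by unfold orient; ring

theorem orient_swap (p q x : ℝ × ℝ) : orient q p x = -orient p q x := by unfold orient; ring

theorem orient_self_left (p q : ℝ × ℝ) : orient p q p = 0 := by unfold orient; ring

theorem orient_self_right (p q : ℝ × ℝ) : orient p q q = 0 := by unfold orient; ring

theorem orient_add_add (p q r x : ℝ × ℝ) :
    orient q r x + orient r p x + orient p q x = orient p q r := by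
  unfold orient; ring

theorem orient_smul (p q r x : ℝ × ℝ) :
    orient p q r • x = orient q r x • p + orient r p x • q + orient p q x • r := by
  ext <;> simp only [orient, Prod.smul_fst, Prod.smul_snd, Prod.fst_add, Prod.snd_add,
    smul_eq_mul] <;> ring

theorem orient_mul_orient (p q r u w x : ℝ × ℝ) :
    orient p q r * orient u w x =
      orient q r x * orient u w p + orient r p x * orient u w q + orient p q x * orient u w r := by
  unfold orient; ring

theorem orient_add_smul {s t : ℝ} (hst : s + t = 1) (p q x y : ℝ × ℝ) :
    orient p q (s • x + t • y) = s * orient p q x + t * orient p q y := by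
  obtain rfl : s = 1 - t := by linarith
  simp only [orient, Prod.fst_add, Prod.snd_add, Prod.smul_fst, Prod.smul_snd, smul_eq_mul]
  ring

theorem continuous_orient (p q : ℝ × ℝ) : Continuous (orient p q) := by
  unfold orient; fun_prop

theorem isOpen_Hplus (p q : ℝ × ℝ) : IsOpen (Hplus p q) :=
  isOpen_lt continuous_const (continuous_orient p q)

theorem closure_Hplus_subset (p q : ℝ × ℝ) : closure (Hplus p q) ⊆ {x | 0 ≤ orient p q x} :=
  closure_lt_subset_le continuous_const (continuous_orient p q)

theorem frontier_Hplus_subset (p q : ℝ × ℝ) : frontier (Hplus p q) ⊆ {x | orient p q x = 0} :=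
  fun _ hx => (frontier_lt_subset_eq continuous_const (continuous_orient p q) hx).symm

theorem convex_setOf_orient_nonneg (p q : ℝ × ℝ) : Convex ℝ {x | 0 ≤ orient p q x} := by
  intro x hx y hy s t hs ht hst
  rw [mem_ofPred_eq, orient_add_smul hst]
  exact add_nonneg (mul_nonneg hs hx) (mul_nonneg ht hy)

theorem orient_pos_of_mem_openSegment (hx : x ∈ openSegment ℝ p q) (hp : 0 < orient u w p)
    (hq : 0 ≤ orient u w q) : 0 < orient u w x := by
  obtain ⟨s, t, hs, ht, hst, rfl⟩ := hx
  rw [orient_add_smul hst]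
  exact add_pos_of_pos_of_nonneg (mul_pos hs hp) (mul_nonneg ht.le hq)

theorem convex_Hplus (p q : ℝ × ℝ) : Convex ℝ (Hplus p q) :=
  convex_iff_openSegment_subset.2 fun _ hx _ hy _ hz => orient_pos_of_mem_openSegment hz hx hy.le

/-- The closed triangle `p q r` when `0 < orient p q r`; it is empty when `orient p q r < 0`. -/
def triangle (p q r : ℝ × ℝ) : Set (ℝ × ℝ) :=
  {x | 0 ≤ orient p q x ∧ 0 ≤ orient q r x ∧ 0 ≤ orient r p x}

theorem isClosed_triangle (p q r : ℝ × ℝ) : IsClosed (triangle p q r) := by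
  simp only [triangle, ofPred_and]
  exact (isClosed_le continuous_const (continuous_orient p q)).inter
    ((isClosed_le continuous_const (continuous_orient q r)).inter
      (isClosed_le continuous_const (continuous_orient r p)))

theorem convex_triangle (p q r : ℝ × ℝ) : Convex ℝ (triangle p q r) := by
  simp only [triangle, ofPred_and]
  exact (convex_setOf_orient_nonneg p q).inter
    ((convex_setOf_orient_nonneg q r).inter (convex_setOf_orient_nonneg r p))

theorem isBounded_triangle (h : 0 < orient p q r) : IsBounded (triangle p q r) := by
  set M := ‖p‖ + ‖q‖ + ‖r‖
  refine (Metric.isBounded_closedBall (x := 0) (r := M)).subset fun x hx => ?_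
  obtain ⟨h1, h2, h3⟩ := hx
  rw [mem_closedBall_zero_iff]
  refine le_of_mul_le_mul_left ?_ h
  calc orient p q r * ‖x‖ = ‖orient q r x • p + orient r p x • q + orient p q x • r‖ := by
        rw [← orient_smul, norm_smul, Real.norm_of_nonneg h.le]
    _ ≤ orient q r x * ‖p‖ + orient r p x * ‖q‖ + orient p q x * ‖r‖ := by
        refine (norm_add₃_le ..).trans_eq ?_
        rw [norm_smul, norm_smul, norm_smul, Real.norm_of_nonneg h1, Real.norm_of_nonneg h2,
          Real.norm_of_nonneg h3]
    _ ≤ orient q r x * M + orient r p x * M + orient p q x * M := by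
        gcongr <;> linarith [norm_nonneg p, norm_nonneg q, norm_nonneg r]
    _ = orient p q r * M := by rw [← add_mul, ← add_mul, orient_add_add]

theorem mem_segment_of_orient_eq_zero (h : 0 < orient p q r) (hqr : 0 ≤ orient q r x)
    (hrp : 0 ≤ orient r p x) (hpq : orient p q x = 0) : x ∈ segment ℝ p q := by
  have hsum : orient q r x + orient r p x = orient p q r := by
    linarith [orient_add_add p q r x]
  refine ⟨orient q r x / orient p q r, orient r p x / orient p q r, div_nonneg hqr h.le,
    div_nonneg hrp h.le, by rw [← add_div, hsum, div_self h.ne'], ?_⟩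
  rw [div_eq_inv_mul, div_eq_inv_mul, mul_smul, mul_smul, ← smul_add]
  have := orient_smul p q r x
  rw [hpq, zero_smul, add_zero] at this
  rw [← this, smul_smul, inv_mul_cancel₀ h.ne', one_smul]

theorem mem_segment_of_collinear (hcol : orient u w x = 0) (hu : 0 < orient x p u)
    (hw : orient x p w < 0) : x ∈ segment ℝ u w := by
  have hpux : 0 < orient p u x := by linarith [orient_rotate p u x, orient_rotate u x p]
  have hwpx : 0 < orient w p x := by
    linarith [orient_swap p w x, orient_rotate p w x, orient_rotate w x p]
  exact mem_segment_of_orient_eq_zero (by linarith [orient_add_add u w p x]) hwpx.le hpux.le hcol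

theorem frontier_triangle_subset (h : 0 < orient p q r) :
    frontier (triangle p q r) ⊆ segment ℝ p q ∪ segment ℝ q r ∪ segment ℝ r p := by
  intro x hx
  obtain ⟨h1, h2, h3⟩ := (isClosed_triangle p q r).frontier_subset hx
  rcases h1.eq_or_lt with h1 | h1
  · exact Or.inl (Or.inl (mem_segment_of_orient_eq_zero h h2 h3 h1.symm))
  rcases h2.eq_or_lt with h2 | h2
  · exact Or.inl (Or.inr
      (mem_segment_of_orient_eq_zero (by rwa [← orient_rotate]) h3 h1.le h2.symm))
  rcases h3.eq_or_lt with h3 | h3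
  · exact Or.inr (mem_segment_of_orient_eq_zero
      (by linarith [orient_rotate p q r, orient_rotate q r p]) h1.le h2.le h3.symm)
  have hint : Hplus p q ∩ Hplus q r ∩ Hplus r p ⊆ interior (triangle p q r) :=
    interior_maximal (fun y hy => ⟨hy.1.1.le, hy.1.2.le, hy.2.le⟩)
      (((isOpen_Hplus p q).inter (isOpen_Hplus q r)).inter (isOpen_Hplus r p))
  exact absurd (hint ⟨⟨h1, h2⟩, h3⟩) hx.2

end Orient

namespace SimplePolygon

variable (P : SimplePolygon) {p q r s : ℝ × ℝ}

theorem subset_carrier_of_frontier_subset {R : Set (ℝ × ℝ)} (hR : IsBounded R)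
    (hfr : frontier R ⊆ P.carrier) : R ⊆ P.carrier := by
  set Γ := ⋃ i : Fin P.n, segment ℝ (P.vtx i) (P.vtx (finRotate P.n i))
  have hcarrier : ∀ y, y ∈ P.carrier ↔ IsBounded (connectedComponentIn Γᶜ y) := fun y => by
    rw [P.carrier_def]; rfl
  intro x hxR
  by_contra hx
  have hxΓ : x ∈ Γᶜ := fun h => hx <| (hcarrier x).2 <| by
    rw [connectedComponentIn_eq_empty (not_not.2 h)]; exact isBounded_empty
  have hout : ∀ y ∈ connectedComponentIn Γᶜ x, y ∉ P.carrier := fun y hy hyP =>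
    hx <| (hcarrier x).2 <| by rw [connectedComponentIn_eq hy]; exact (hcarrier y).1 hyP
  have hint : ∀ y ∈ connectedComponentIn Γᶜ x, y ∈ closure R → y ∈ interior R :=
    fun y hy hyR => by_contra fun h => hout y hy (hfr ⟨hyR, h⟩)
  have hxC := mem_connectedComponentIn hxΓ
  have hC : connectedComponentIn Γᶜ x ⊆ interior R :=
    (isPreconnected_connectedComponentIn (F := Γᶜ) (x := x)).subset_of_closure_inter_subset
      isOpen_interior
      ⟨x, hxC, hint x hxC (subset_closure hxR)⟩
      fun y hy => hint y hy.2 (closure_mono interior_subset hy.1)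
  exact hx <| (hcarrier x).2 <| hR.subset (hC.trans interior_subset)

theorem triangle_subset_carrier (h : 0 < orient p q r) (hpq : segment ℝ p q ⊆ P.carrier)
    (hqr : segment ℝ q r ⊆ P.carrier) (hrp : segment ℝ r p ⊆ P.carrier) :
    triangle p q r ⊆ P.carrier :=
  P.subset_carrier_of_frontier_subset (isBounded_triangle h) <|
    (frontier_triangle_subset h).trans (union_subset (union_subset hpq hqr) hrp)

theorem triangle_union_subset_carrier (hr : 0 < orient p q r) (hs : 0 < orient q p s)
    (hqr : segment ℝ q r ⊆ P.carrier) (hrp : segment ℝ r p ⊆ P.carrier)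
    (hps : segment ℝ p s ⊆ P.carrier) (hsq : segment ℝ s q ⊆ P.carrier) :
    triangle p q r ∪ triangle q p s ⊆ P.carrier := by
  set R := triangle p q r ∪ triangle q p s
  have hint : openSegment ℝ p q ⊆ interior R := by
    have hsub : Hplus q r ∩ Hplus r p ∩ (Hplus p s ∩ Hplus s q) ⊆ R := by
      rintro y ⟨⟨h1, h2⟩, h3, h4⟩
      rcases le_or_gt 0 (orient p q y) with h | h
      · exact Or.inl ⟨h, h1.le, h2.le⟩
      · exact Or.inr ⟨by linarith [orient_swap p q y], h3.le, h4.le⟩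
    refine fun x hx => interior_maximal hsub (((isOpen_Hplus q r).inter (isOpen_Hplus r p)).inter
      ((isOpen_Hplus p s).inter (isOpen_Hplus s q))) ⟨⟨?_, ?_⟩, ?_, ?_⟩
    · exact orient_pos_of_mem_openSegment hx (by rwa [← orient_rotate]) (orient_self_left q r).ge
    · exact orient_pos_of_mem_openSegment (openSegment_symm ℝ p q ▸ hx)
        (by linarith [orient_rotate p q r, orient_rotate q r p]) (orient_self_right r p).ge
    · exact orient_pos_of_mem_openSegment (openSegment_symm ℝ p q ▸ hx)
        (by rwa [← orient_rotate]) (orient_self_left p s).ge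
    · exact orient_pos_of_mem_openSegment hx
        (by linarith [orient_rotate q p s, orient_rotate p s q]) (orient_self_right s q).ge
  have hdiag : ∀ x ∈ frontier R, x ∈ segment ℝ p q → x ∈ P.carrier := by
    intro x hx hpq
    rw [← insert_endpoints_openSegment] at hpq
    rcases hpq with rfl | rfl | hpq
    · exact hrp (right_mem_segment ℝ r x)
    · exact hqr (left_mem_segment ℝ x r)
    · exact absurd (hint hpq) hx.2
  refine P.subset_carrier_of_frontier_subset ((isBounded_triangle hr).union (isBounded_triangle hs))
    fun x hx => ?_
  rcases frontier_union_subset _ _ hx with ⟨hx₁, -⟩ | ⟨-, hx₂⟩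
  · rcases frontier_triangle_subset hr hx₁ with (h | h) | h
    exacts [hdiag x hx h, hqr h, hrp h]
  · rcases frontier_triangle_subset hs hx₂ with (h | h) | h
    exacts [hdiag x hx (segment_symm ℝ q p ▸ h), hps h, hsq h]

theorem triangle_diff_subset_carrier (hr : 0 < orient p q r) (hs : 0 < orient p q s)
    (hqr : segment ℝ q r ⊆ P.carrier) (hrp : segment ℝ r p ⊆ P.carrier)
    (hqs : segment ℝ q s ⊆ P.carrier) (hsp : segment ℝ s p ⊆ P.carrier) :
    triangle p q r \ (Hplus q s ∩ Hplus s p) ⊆ P.carrier := by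
  have hclosed : IsClosed (triangle p q r \ (Hplus q s ∩ Hplus s p)) :=
    (isClosed_triangle p q r).sdiff ((isOpen_Hplus q s).inter (isOpen_Hplus s p))
  refine P.subset_carrier_of_frontier_subset ((isBounded_triangle hr).subset sdiff_subset)
    fun x hx => ?_
  obtain ⟨⟨h1, -, -⟩, hxU⟩ := hclosed.frontier_subset hx
  rw [sdiff_eq] at hx
  rcases frontier_inter_subset _ _ hx with ⟨hT, -⟩ | ⟨-, hU⟩
  · rcases frontier_triangle_subset hr hT with (h | h) | h
    · rw [← insert_endpoints_openSegment] at h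
      rcases h with rfl | rfl | h
      · exact hsp (right_mem_segment ℝ s x)
      · exact hqs (left_mem_segment ℝ x s)
      · refine absurd ⟨?_, ?_⟩ hxU
        · exact orient_pos_of_mem_openSegment h (by rwa [← orient_rotate])
            (orient_self_left q s).ge
        · exact orient_pos_of_mem_openSegment (openSegment_symm ℝ p q ▸ h)
            (by linarith [orient_rotate p q s, orient_rotate q s p]) (orient_self_right s p).ge
    · exact hqr h
    · exact hrp h
  · rw [frontier_compl] at hU
    rcases frontier_inter_subset _ _ hU with ⟨hfr, hcl⟩ | ⟨hcl, hfr⟩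
    · exact hqs (mem_segment_of_orient_eq_zero (by rwa [← orient_rotate])
        (closure_Hplus_subset s p hcl) h1 (frontier_Hplus_subset q s hfr))
    · exact hsp (mem_segment_of_orient_eq_zero
        (by linarith [orient_rotate p q s, orient_rotate q s p]) h1
        (closure_Hplus_subset q s hcl) (frontier_Hplus_subset s p hfr))

end SimplePolygon

section Confinement

variable {a b c v w y : ℝ × ℝ}

theorem segment_subset_triangle_inter (habc : 0 < orient a b c) (hv : 0 < orient b a v)
    (hcbv : 0 ≤ orient c b v) :
    segment ℝ v b ⊆ triangle c a v ∩ Hplus c a ∩ {y | 0 ≤ orient c b y} := by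
  have hcav : 0 < orient c a v := by
    linarith [orient_add_add a b c v, orient_swap c b v, orient_swap b a v]
  have hcab : 0 < orient c a b := by linarith [orient_rotate a b c, orient_rotate b c a]
  refine (((convex_triangle c a v).inter (convex_Hplus c a)).inter
    (convex_setOf_orient_nonneg c b)).segment_subset ?_ ?_
  · exact ⟨⟨⟨hcav.le, (orient_self_right a v).ge, (orient_self_left v c).ge⟩, hcav⟩, hcbv⟩
  · refine ⟨⟨⟨hcab.le, ?_, ?_⟩, hcab⟩, (orient_self_right c b).ge⟩
    · linarith [orient_rotate a v b, orient_rotate v b a]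
    · linarith [orient_rotate v c b]

theorem notMem_Hplus_of_orient_nonneg (habc : 0 < orient a b c) (hw : orient c b w < 0)
    (hcaw : 0 ≤ orient c a w) (hy : 0 < orient c a y) (hcby : 0 ≤ orient c b y) :
    y ∉ Hplus w c := by
  intro hwcy
  have hcba : orient c b a < 0 := by linarith [orient_rotate c b a, orient_swap a b c]
  -- expand `orient c b y` over the triangle `c a w`: the left side is `≥ 0`, the right `< 0`
  have key := orient_mul_orient c a w c b y
  rw [orient_self_left c b, mul_zero, zero_add] at key
  nlinarith [mul_nonneg hcaw hcby, mul_neg_of_pos_of_neg (mem_Hplus.1 hwcy) hcba,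
    mul_neg_of_pos_of_neg hy hw]

end Confinement

theorem stmt8_general (P : SimplePolygon) (a b c w : ℝ × ℝ)
    (hccw : c ∈ Hplus a b)
    (hw1 : w ∈ Hplus b a) (hw2 : w ∈ Hminus c b)
    (hwa : segment ℝ w a ⊆ P.carrier) (hwc : segment ℝ w c ⊆ P.carrier) :
    ∀ v ∈ P.carrier, v ∈ Hplus b a →
      segment ℝ v a ⊆ P.carrier → segment ℝ v c ⊆ P.carrier →
      ¬ segment ℝ v b ⊆ P.carrier → v ∈ Hminus c b := by
  intro v _ hv hva hvc hvb
  by_contra hcbv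
  have hseg := segment_subset_triangle_inter hccw hv (not_lt.1 hcbv)
  have hcav : 0 < orient c a v := (hseg (left_mem_segment ℝ v b)).1.2
  have hav : segment ℝ a v ⊆ P.carrier := segment_symm ℝ a v ▸ hva
  refine hvb fun y hy => ?_
  obtain ⟨⟨hyT, hyca⟩, hycb⟩ := hseg hy
  rcases lt_trichotomy (orient c a w) 0 with hcaw | hcaw | hcaw
  · exact P.triangle_union_subset_carrier hcav (by linarith [orient_swap c a w]) hav hvc
      (segment_symm ℝ c w ▸ hwc) hwa (Or.inl hyT)
  · have ha : a ∈ segment ℝ c w := mem_segment_of_collinear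
      (by linarith [orient_rotate c w a, orient_rotate w a c, orient_swap c a w]) hccw
      (by linarith [orient_swap b a w, mem_Hplus.1 hw1])
    exact P.triangle_subset_carrier hcav (((convex_segment c w).segment_subset
      (left_mem_segment ℝ c w) ha).trans (segment_symm ℝ c w ▸ hwc)) hav hvc hyT
  · exact P.triangle_diff_subset_carrier hcav hcaw hav hvc (segment_symm ℝ a w ▸ hwa) hwc
      ⟨hyT, fun h => notMem_Hplus_of_orient_nonneg hccw hw2 hcaw.le hyca hycb h.2⟩

/-- Triangle confinement lemma: if `a,b,c` are in counterclockwise order, and some point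
`w ∈ H⁺(b,a) ∩ H⁻(c,b)` of `P` sees `a` and `c`, then every point `v ∈ H⁺(b,a)` of `P`
seeing `a` and `c` but not `b` lies in `H⁻(c,b)`. -/
theorem stmt8 (P : SimplePolygon) (a b c w : ℝ × ℝ)
    (ha : a ∈ P.carrier) (hb : b ∈ P.carrier) (hc : c ∈ P.carrier) (hw : w ∈ P.carrier)
    (hccw : c ∈ Hplus a b)
    (hw1 : w ∈ Hplus b a) (hw2 : w ∈ Hminus c b)
    (hwa : segment ℝ w a ⊆ P.carrier) (hwc : segment ℝ w c ⊆ P.carrier) :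
    ∀ v ∈ P.carrier, v ∈ Hplus b a →
      segment ℝ v a ⊆ P.carrier → segment ℝ v c ⊆ P.carrier →
      ¬ segment ℝ v b ⊆ P.carrier → v ∈ Hminus c b :=
  stmt8_general P a b c w hccw hw1 hw2 hwa hwc
end

section
/- Restriction to a sub-wedge: under the hypotheses of the wedge confinement lemma, additionally let w₁, w₂ be points of P seeing a, b₁, b₂ that subtend the maximal angle at a among such points, defining a sub-wedge W of U with apex a. Then for every point v' ∈ P that sees b₁ and b₂: v' sees a if and only if v' ∈ W. -/
/-- The planar cross product. -/
def cross (p q : ℝ × ℝ) : ℝ := p.1 * q.2 - p.2 * q.1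

/-!
Let `v' ∈ W` see `b₁` and `b₂`; we show that `[a, v']` lies in the carrier. The carrier of `P`
has no holes: a bounded set whose frontier lies in the carrier lies in the carrier. So it suffices
to find two bounded regions on opposite sides of `[a, v']`, each containing a triangle with base
`[a, v']` and with frontier inside the carrier except for `[a, v']` itself: their union contains a
neighbourhood of the open segment, so its whole frontier lies in the carrier.

Since `v'` lies in the cone spanned by `w₁ - a` and `w₂ - a`, either `v'` is on one of the lines
`a bᵢ` (and then `a ∈ [v', bᵢ]`), or some `wᵢ` is on the ray from `a` through `v'`, or `w₁` and
`w₂` lie strictly on opposite sides of the line `a v'`, next to `b₁` and `b₂` respectively. In the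
last case the region on the side of `w` and `b` is the quadrilateral `a w b v'`, cut into the
triangles `v' w a` and `v' w b`, or, when `[a, w]` crosses `[v', b]` at `c`, the triangle `a v' c`.
-/

open Set Filter Topology Bornology

section Cross

variable (u v w : ℝ × ℝ) (c : ℝ)

lemma cross_self' : cross u u = 0 := by
  simp only [cross]; ring

lemma cross_swap : cross u v = -cross v u := by
  simp only [cross]; ring

lemma cross_add_left : cross (u + v) w = cross u w + cross v w := by
  simp only [cross, Prod.fst_add, Prod.snd_add]; ring

lemma cross_add_right : cross u (v + w) = cross u v + cross u w := by
  simp only [cross, Prod.fst_add, Prod.snd_add]; ring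

lemma cross_sub_right : cross u (v - w) = cross u v - cross u w := by
  simp only [cross, Prod.fst_sub, Prod.snd_sub]; ring

lemma cross_smul_left : cross (c • u) v = c * cross u v := by
  simp only [cross, Prod.smul_fst, Prod.smul_snd, smul_eq_mul]; ring

lemma cross_smul_right : cross u (c • v) = c * cross u v := by
  simp only [cross, Prod.smul_fst, Prod.smul_snd, smul_eq_mul]; ring

lemma cross_smul_add_cross_smul_add_cross_smul :
    cross u v • w + cross v w • u + cross w u • v = 0 := by
  ext <;> simp only [cross, Prod.fst_add, Prod.snd_add, Prod.smul_fst, Prod.smul_snd,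
    smul_eq_mul, Prod.fst_zero, Prod.snd_zero] <;> ring

variable {u v}

lemma eq_div_smul_add_div_smul (huv : cross u v ≠ 0) :
    w = (cross w v / cross u v) • u + (cross u w / cross u v) • v := by
  have key : cross u v • w = cross w v • u + cross u w • v := by
    linear_combination (norm := module) cross_smul_add_cross_smul_add_cross_smul u v w -
      (cross_swap v w) • u - (cross_swap w u) • v
  rw [div_eq_inv_mul, div_eq_inv_mul, mul_smul, mul_smul, ← smul_add, ← key,
    inv_smul_smul₀ huv]

lemma eq_smul_of_cross_eq_zero {w : ℝ × ℝ} (huw : cross u w = 0) (huv : cross u v ≠ 0) :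
    w = (cross w v / cross u v) • u := by
  conv_lhs => rw [eq_div_smul_add_div_smul w huv]
  simp [huw]

end Cross

section Triangle

lemma mem_convexHull_triple_iff {E : Type*} [AddCommGroup E] [Module ℝ E] {p q r z : E} :
    z ∈ convexHull ℝ {p, q, r} ↔
      ∃ s t : ℝ, 0 ≤ s ∧ 0 ≤ t ∧ s + t ≤ 1 ∧ z = p + s • (q - p) + t • (r - p) := by
  rw [convexHull_insert (insert_nonempty _ _), convexHull_pair, convexJoin_singleton_left]
  simp only [mem_iUnion, segment_eq_image', mem_image, mem_Icc, exists_prop]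
  constructor
  · rintro ⟨_, ⟨μ, ⟨hμ₀, hμ₁⟩, rfl⟩, θ, ⟨hθ₀, hθ₁⟩, rfl⟩
    refine ⟨θ * (1 - μ), θ * μ, by nlinarith, by positivity, by nlinarith, by module⟩
  · rintro ⟨s, t, hs, ht, hst, rfl⟩
    rcases (add_nonneg hs ht).eq_or_lt with h | h
    · obtain ⟨rfl, rfl⟩ : s = 0 ∧ t = 0 := ⟨by linarith, by linarith⟩
      exact ⟨q, ⟨0, by simp⟩, 0, by simp⟩
    · refine ⟨_, ⟨t / (s + t), ⟨by positivity, (div_le_one h).2 (by linarith)⟩, rfl⟩,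
        s + t, ⟨h.le, hst⟩, ?_⟩
      rw [smul_sub, smul_add, smul_smul, mul_div_cancel₀ _ h.ne']
      module

variable {p q r y : ℝ × ℝ}

lemma convexHull_triple_mem_nhdsWithin (hD : cross (q - p) (r - p) ≠ 0) {s t : ℝ}
    (hs : 0 < s) (hst : s + t < 1) (hy : y = p + s • (q - p) + t • (r - p)) :
    convexHull ℝ {p, q, r} ∈ 𝓝[{z | 0 ≤ cross (q - p) (z - p) * cross (q - p) (r - p)}] y := by
  set D := cross (q - p) (r - p)
  -- the coordinates of `z - p` in the basis `q - p`, `r - p`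
  have hf : Continuous fun z => cross (z - p) (r - p) / D := by unfold cross; fun_prop
  have hg : Continuous fun z => cross (q - p) (z - p) / D := by unfold cross; fun_prop
  have hyp : y - p = s • (q - p) + t • (r - p) := by rw [hy]; abel
  have hfy : cross (y - p) (r - p) / D = s := by
    rw [hyp, cross_add_left, cross_smul_left, cross_smul_left, cross_self']; field_simp; ring
  have hgy : cross (q - p) (y - p) / D = t := by
    rw [hyp, cross_add_right, cross_smul_right, cross_smul_right, cross_self']; field_simp; ring
  rw [mem_nhdsWithin_iff_eventually]
  filter_upwards [continuousAt_const.eventually_lt hf.continuousAt (hfy ▸ hs),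
    (hf.add hg).continuousAt.eventually_lt continuousAt_const (by simpa [hfy, hgy])]
    with z hz₁ hz₂ (hz₃ : 0 ≤ cross (q - p) (z - p) * D)
  refine mem_convexHull_triple_iff.2
    ⟨cross (z - p) (r - p) / D, cross (q - p) (z - p) / D, hz₁.le, ?_, hz₂.le, ?_⟩
  · rw [← mul_div_mul_right _ _ hD]; exact div_nonneg hz₃ (mul_self_nonneg D)
  · rw [add_assoc, ← eq_div_smul_add_div_smul (z - p) hD]; abel

lemma union_convexHull_mem_nhds {r' : ℝ × ℝ} (hy : y ∈ openSegment ℝ p q)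
    (hr : cross (q - p) (r - p) * cross (q - p) (r' - p) < 0) :
    convexHull ℝ {p, q, r} ∪ convexHull ℝ {p, q, r'} ∈ 𝓝 y := by
  rw [openSegment_eq_image'] at hy
  obtain ⟨s, ⟨hs₀, hs₁⟩, rfl⟩ := hy
  have hyp : p + s • (q - p) = p + s • (q - p) + (0 : ℝ) • (r - p) := by simp
  have hyp' : p + s • (q - p) = p + s • (q - p) + (0 : ℝ) • (r' - p) := by simp
  have h := convexHull_triple_mem_nhdsWithin (left_ne_zero_of_mul hr.ne) hs₀ (by simpa) hyp
  have h' := convexHull_triple_mem_nhdsWithin (right_ne_zero_of_mul hr.ne) hs₀ (by simpa) hyp'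
  have hcover : {z | 0 ≤ cross (q - p) (z - p) * cross (q - p) (r - p)} ∪
      {z | 0 ≤ cross (q - p) (z - p) * cross (q - p) (r' - p)} = univ := by
    refine eq_univ_of_forall fun z =>
      (le_or_gt 0 (cross (q - p) (z - p) * cross (q - p) (r - p))).imp id fun hz => ?_
    rw [mem_ofPred_eq]
    nlinarith [sq_nonneg (cross (q - p) (z - p))]
  rw [← nhdsWithin_univ, ← hcover, nhdsWithin_union]
  exact ⟨mem_of_superset h subset_union_left, mem_of_superset h' subset_union_right⟩

lemma frontier_convexHull_triple_subset (hD : cross (q - p) (r - p) ≠ 0) :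
    frontier (convexHull ℝ {p, q, r}) ⊆ segment ℝ p q ∪ segment ℝ p r ∪ segment ℝ q r := by
  intro y hy
  have hclosed : IsClosed (convexHull ℝ {p, q, r}) := (toFinite _).isClosed_convexHull ℝ
  obtain ⟨s, t, hs, ht, hst, rfl⟩ := mem_convexHull_triple_iff.1 (hclosed.frontier_subset hy)
  simp only [mem_union, segment_eq_image', mem_image, mem_Icc]
  rcases hs.eq_or_lt with rfl | hs
  · exact Or.inl (Or.inr ⟨t, ⟨ht, by linarith⟩, by simp⟩)
  rcases ht.eq_or_lt with rfl | ht
  · exact Or.inl (Or.inl ⟨s, ⟨hs.le, by linarith⟩, by simp⟩)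
  rcases hst.eq_or_lt with hst | hst
  · exact Or.inr ⟨t, ⟨ht.le, by linarith⟩, by rw [show s = 1 - t by linarith]; module⟩
  refine absurd (mem_interior_iff_mem_nhds.2 ?_) hy.2
  rw [← nhdsWithin_eq_nhds.2 ?_]
  · exact convexHull_triple_mem_nhdsWithin hD hs hst rfl
  have hc : Continuous fun z => cross (q - p) (z - p) * cross (q - p) (r - p) := by
    unfold cross; fun_prop
  have hval : 0 < cross (q - p) (p + s • (q - p) + t • (r - p) - p) * cross (q - p) (r - p) := by
    rw [add_assoc, add_sub_cancel_left, cross_add_right, cross_smul_right, cross_smul_right,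
      cross_self']
    nlinarith [mul_self_pos.2 hD]
  filter_upwards [continuousAt_const.eventually_lt hc.continuousAt hval] with z hz
  exact hz.le

end Triangle

structure IsCap (K : Set (ℝ × ℝ)) (p q r : ℝ × ℝ) (T : Set (ℝ × ℝ)) : Prop where
  isBounded : IsBounded T
  frontier_subset : frontier T ⊆ K ∪ segment ℝ p q
  convexHull_subset : convexHull ℝ {p, q, r} ⊆ T

section Cap

variable {K S T : Set (ℝ × ℝ)} {p q r r' : ℝ × ℝ}

lemma isCap_convexHull (hpr : segment ℝ p r ⊆ K) (hqr : segment ℝ q r ⊆ K)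
    (hD : cross (q - p) (r - p) ≠ 0) : IsCap K p q r (convexHull ℝ {p, q, r}) where
  isBounded := ((toFinite _).isCompact_convexHull ℝ).isBounded
  frontier_subset y hy := by
    rcases frontier_convexHull_triple_subset hD hy with (h | h) | h
    exacts [Or.inr h, Or.inl (hpr h), Or.inl (hqr h)]
  convexHull_subset := subset_rfl

lemma IsCap.frontier_union_subset (hS : IsCap K p q r S) (hT : IsCap K p q r' T)
    (hr : cross (q - p) (r - p) * cross (q - p) (r' - p) < 0) (hp : p ∈ K) (hq : q ∈ K) :
    frontier (S ∪ T) ⊆ K := by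
  intro y hy
  have hyST : y ∈ frontier S ∪ frontier T :=
    (_root_.frontier_union_subset S T hy).imp (·.1) (·.2)
  obtain hyK | hypq := hyST.elim (hS.frontier_subset ·) (hT.frontier_subset ·)
  · exact hyK
  rw [← insert_endpoints_openSegment] at hypq
  rcases hypq with rfl | rfl | hyo
  · exact hp
  · exact hq
  refine absurd (interior_mono ?_ (mem_interior_iff_mem_nhds.2 (union_convexHull_mem_nhds hyo hr)))
    hy.2
  exact union_subset_union hS.convexHull_subset hT.convexHull_subset

end Cap

lemma subset_setOf_isBounded_connectedComponentIn {X : Type*} [TopologicalSpace X]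
    [Bornology X] {F t : Set X} (ht : IsBounded t)
    (hf : frontier t ⊆ {y | IsBounded (connectedComponentIn F y)}) :
    t ⊆ {y | IsBounded (connectedComponentIn F y)} := by
  intro x hx
  by_contra hC
  have hxC : x ∈ connectedComponentIn F x := by
    by_contra hxC
    exact hC (by rw [mem_ofPred_eq, connectedComponentIn_eq_empty fun hxF =>
      hxC (mem_connectedComponentIn hxF)]; exact isBounded_empty)
  have hCt : connectedComponentIn F x ⊆ interior t ∪ (closure t)ᶜ := by
    intro y hyC
    by_cases hyt : y ∈ closure t
    · refine Or.inl (by_contra fun hyi => hC ?_)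
      rw [mem_ofPred_eq, connectedComponentIn_eq hyC]
      exact hf ⟨hyt, hyi⟩
    · exact Or.inr hyt
  have hxi : x ∈ interior t := (hCt hxC).resolve_right fun h => h (subset_closure hx)
  exact hC (ht.subset ((isPreconnected_connectedComponentIn.subset_left_of_subset_union
    isOpen_interior isClosed_closure.isOpen_compl
    (disjoint_compl_right.mono_left interior_subset_closure) hCt ⟨x, hxC, hxi⟩).trans
    interior_subset))

lemma SimplePolygon.subset_carrier_of_frontier_subset_s12 (P : SimplePolygon) {t : Set (ℝ × ℝ)}
    (ht : IsBounded t) (hf : frontier t ⊆ P.carrier) : t ⊆ P.carrier := by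
  rw [P.carrier_def] at hf ⊢
  exact subset_setOf_isBounded_connectedComponentIn ht hf

lemma IsCap.segment_subset_carrier {P : SimplePolygon} {S T : Set (ℝ × ℝ)} {p q r r' : ℝ × ℝ}
    (hS : IsCap P.carrier p q r S) (hT : IsCap P.carrier p q r' T)
    (hr : cross (q - p) (r - p) * cross (q - p) (r' - p) < 0) (hp : p ∈ P.carrier)
    (hq : q ∈ P.carrier) : segment ℝ p q ⊆ P.carrier :=
  calc segment ℝ p q ⊆ convexHull ℝ {p, q, r} := segment_subset_convexHull (by simp) (by simp)
    _ ⊆ S ∪ T := hS.convexHull_subset.trans subset_union_left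
    _ ⊆ P.carrier := P.subset_carrier_of_frontier_subset_s12 (hS.isBounded.union hT.isBounded)
        (hS.frontier_union_subset hT hr hp hq)

lemma exists_isCap {K : Set (ℝ × ℝ)} {a v w b : ℝ × ℝ} (hwa : segment ℝ w a ⊆ K)
    (hwb : segment ℝ w b ⊆ K) (hvb : segment ℝ v b ⊆ K)
    (hw : 0 < cross (v - a) (w - a) * cross (v - a) (b - a))
    (hv : 0 ≤ cross (b - a) (w - a) * cross (b - a) (v - a)) :
    ∃ r T, IsCap K a v r T ∧ 0 < cross (v - a) (r - a) * cross (v - a) (b - a) := by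
  set X := cross (v - a) (w - a)
  set Y := cross (v - a) (b - a)
  set Z := cross (b - a) (w - a)
  have hXw : cross (w - v) (a - v) = X := by
    simp only [X, cross, Prod.fst_sub, Prod.snd_sub]; ring
  have hXYZ : cross (w - v) (b - v) = X - Y - Z := by
    simp only [X, Y, Z, cross, Prod.fst_sub, Prod.snd_sub]; ring
  rcases lt_or_ge (cross (w - v) (a - v) * cross (w - v) (b - v)) 0 with hfan | hkite
  · -- `[v, w]` separates `a` from `b`: glue the triangles `v w a` and `v w b` along it
    have hS : IsCap (K ∪ segment ℝ a v) v w a (convexHull ℝ {v, w, a}) :=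
      isCap_convexHull (segment_symm ℝ v a ▸ subset_union_right) (hwa.trans subset_union_left)
        (left_ne_zero_of_mul hfan.ne)
    have hT : IsCap (K ∪ segment ℝ a v) v w b (convexHull ℝ {v, w, b}) :=
      isCap_convexHull (hvb.trans subset_union_left) (hwb.trans subset_union_left)
        (right_ne_zero_of_mul hfan.ne)
    refine ⟨w, _, ⟨hS.isBounded.union hT.isBounded,
      hS.frontier_union_subset hT hfan (Or.inr (right_mem_segment ℝ a v))
        (Or.inl (hwa (left_mem_segment ℝ w a))), ?_⟩, hw⟩
    rw [insert_comm a v, pair_comm a w]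
    exact subset_union_left
  · -- `[a, w]` meets `[v, b]` at `c`, since `X • (b - a) = Z • (v - a) + Y • (w - a)` in the
    -- plane; the triangle `a v c` is the cap
    rw [hXw, hXYZ] at hkite
    rw [cross_swap (b - a)] at hv
    have hXZ : X * Z ≤ 0 := by
      nlinarith [mul_nonpos_of_nonneg_of_nonpos (mul_self_nonneg X) (by linarith : Z * Y ≤ 0)]
    have hX : X ≠ 0 := left_ne_zero_of_mul hw.ne'
    set N := X * X - X * Z
    have hN : 0 < N := by have := mul_self_pos.2 hX; linarith
    set c : ℝ × ℝ := N⁻¹ • ((X * X) • b - (X * Z) • v)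
    have hNc : N • c = (X * X) • b - (X * Z) • v := smul_inv_smul₀ hN.ne' _
    have hcvb : c ∈ segment ℝ v b := by
      refine mem_segment_iff_div.2 ⟨-(X * Z), X * X, by linarith, mul_self_nonneg X, ?_, ?_⟩ <;>
        rw [show -(X * Z) + X * X = N by ring]
      · exact hN
      · simp only [c, div_eq_inv_mul, mul_smul]; module
    have hcwa : c ∈ segment ℝ w a := by
      have hid : (X * Y) • w + (N - X * Y) • a = (X * X) • b - (X * Z) • v := by
        ext <;> simp only [N, X, Y, Z, cross, Prod.fst_add, Prod.snd_add, Prod.fst_sub,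
          Prod.snd_sub, Prod.smul_fst, Prod.smul_snd, smul_eq_mul] <;> ring
      refine mem_segment_iff_div.2 ⟨X * Y, N - X * Y, hw.le, ?_, by simpa, ?_⟩
      · linarith [show N - X * Y = X * (X - Y - Z) by ring]
      · rw [add_sub_cancel]
        simp only [c, ← hid]
        module
    have hcross : cross (v - a) (c - a) = X * X * Y / N := by
      rw [eq_div_iff hN.ne', mul_comm, ← cross_smul_right, smul_sub, hNc,
        show (X * X) • b - (X * Z) • v - N • a = (X * X) • (b - a) - (X * Z) • (v - a) by
          simp only [N]; module,
        cross_sub_right, cross_smul_right, cross_smul_right, cross_self']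
      ring
    have hside : 0 < cross (v - a) (c - a) * Y := by
      rw [hcross, div_mul_eq_mul_div, show X * X * Y * Y = (X * Y) * (X * Y) by ring]
      exact div_pos (mul_pos hw hw) hN
    refine ⟨c, _, isCap_convexHull ?_ ?_ (left_ne_zero_of_mul hside.ne'), hside⟩
    · exact ((convex_segment w a).segment_subset (right_mem_segment ℝ w a) hcwa).trans hwa
    · exact ((convex_segment v b).segment_subset (left_mem_segment ℝ v b) hcvb).trans hvb

section Wedge

lemma segment_subset_union_segment {E : Type*} [AddCommGroup E] [Module ℝ E] {x y z : E}
    (hy : y ∈ segment ℝ x z) : segment ℝ x z ⊆ segment ℝ x y ∪ segment ℝ y z := by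
  intro p hp
  simp only [mem_union, mem_segment_iff_wbtw] at hy hp ⊢
  obtain ⟨s, hs, rfl⟩ := hy
  obtain ⟨t, ht, rfl⟩ := hp
  simp only [AffineMap.lineMap_apply] at *
  rcases wbtw_or_wbtw_smul_vadd_of_nonneg x (z -ᵥ x) ht.1 hs.1 with h | h
  · exact Or.inl h
  · refine Or.inr (Wbtw.trans_left_right ?_ h)
    simpa [AffineMap.lineMap_apply] using (show Wbtw ℝ x _ z from ⟨t, ht, rfl⟩)

lemma mem_segment_of_cross_eq_zero {a b b' x : ℝ × ℝ} (hx : cross (b - a) (x - a) = 0)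
    (hxb' : cross (b' - a) (x - a) * cross (b' - a) (b - a) ≤ 0)
    (hb : cross (b - a) (b' - a) ≠ 0) : a ∈ segment ℝ x b := by
  have hxa := eq_smul_of_cross_eq_zero hx hb
  have hcoef : cross (x - a) (b' - a) / cross (b - a) (b' - a) ≤ 0 := by
    rw [← mul_div_mul_right _ _ hb, cross_swap (x - a), cross_swap (b - a)]
    exact div_nonpos_of_nonpos_of_nonneg (by linarith) (mul_self_nonneg _)
  rw [mem_segment_iff_sameRay, show a - x = -(x - a) by abel, hxa, ← neg_smul]
  exact SameRay.sameRay_nonneg_smul_left _ (neg_nonneg.2 hcoef)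

variable {P : SimplePolygon} {a x w w₁ w₂ b₁ b₂ : ℝ × ℝ}

lemma segment_subset_carrier_of_eq_smul {ζ : ℝ} (hζ : 0 ≤ ζ) (hw : w - a = ζ • (x - a))
    (hwa : segment ℝ w a ⊆ P.carrier) (hwb₁ : segment ℝ w b₁ ⊆ P.carrier)
    (hwb₂ : segment ℝ w b₂ ⊆ P.carrier) (hxb₁ : segment ℝ x b₁ ⊆ P.carrier)
    (hxb₂ : segment ℝ x b₂ ⊆ P.carrier)
    (hb : cross (x - a) (b₁ - a) * cross (x - a) (b₂ - a) < 0) :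
    segment ℝ a x ⊆ P.carrier := by
  rw [segment_symm] at hwa
  rcases le_or_gt 1 ζ with hζ1 | hζ1
  · have hx : x ∈ segment ℝ a w := by
      rw [mem_segment_iff_sameRay, show w - x = (ζ - 1) • (x - a) by
        rw [show w - x = (w - a) - (x - a) by abel, hw]; module]
      exact SameRay.sameRay_nonneg_smul_right _ (by linarith)
    exact ((convex_segment a w).segment_subset (left_mem_segment ℝ a w) hx).trans hwa
  have hxw : x - w = (1 - ζ) • (x - a) := by
    rw [show x - w = (x - a) - (w - a) by abel, hw]; module
  have hwx : w ∈ segment ℝ a x := by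
    rw [mem_segment_iff_sameRay, hw, hxw]
    exact (SameRay.sameRay_nonneg_smul_left _ hζ).nonneg_smul_right (by linarith)
  have hcross : ∀ b, cross (x - w) (b - w) = (1 - ζ) * cross (x - a) (b - a) := by
    intro b
    rw [hxw, show b - w = (b - a) - ζ • (x - a) by rw [← hw]; abel,
      cross_smul_left, cross_sub_right, cross_smul_right, cross_self']
    ring
  have hr : cross (x - w) (b₁ - w) * cross (x - w) (b₂ - w) < 0 := by
    rw [hcross, hcross, show ∀ c d : ℝ, (1 - ζ) * c * ((1 - ζ) * d) = (1 - ζ) ^ 2 * (c * d) by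
      intros; ring]
    exact mul_neg_of_pos_of_neg (by nlinarith) hb
  have hwx' : segment ℝ w x ⊆ P.carrier :=
    (isCap_convexHull hwb₁ hxb₁ (left_ne_zero_of_mul hr.ne)).segment_subset_carrier
      (isCap_convexHull hwb₂ hxb₂ (right_ne_zero_of_mul hr.ne)) hr
      (hwa (right_mem_segment ℝ a w)) (hxb₁ (left_mem_segment ℝ x b₁))
  exact (segment_subset_union_segment hwx).trans (union_subset hwa hwx')

lemma segment_subset_carrier_of_opposite_sides (hw₁a : segment ℝ w₁ a ⊆ P.carrier)
    (hw₁b₁ : segment ℝ w₁ b₁ ⊆ P.carrier) (hw₂a : segment ℝ w₂ a ⊆ P.carrier)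
    (hw₂b₂ : segment ℝ w₂ b₂ ⊆ P.carrier) (hxb₁ : segment ℝ x b₁ ⊆ P.carrier)
    (hxb₂ : segment ℝ x b₂ ⊆ P.carrier)
    (h₁ : 0 < cross (x - a) (w₁ - a) * cross (x - a) (b₁ - a))
    (h₂ : 0 < cross (x - a) (w₂ - a) * cross (x - a) (b₂ - a))
    (h₁' : 0 ≤ cross (b₁ - a) (w₁ - a) * cross (b₁ - a) (x - a))
    (h₂' : 0 ≤ cross (b₂ - a) (w₂ - a) * cross (b₂ - a) (x - a))
    (hb : cross (x - a) (b₁ - a) * cross (x - a) (b₂ - a) < 0) :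
    segment ℝ a x ⊆ P.carrier := by
  obtain ⟨r, S, hS, hr⟩ := exists_isCap hw₁a hw₁b₁ hxb₁ h₁ h₁'
  obtain ⟨r', T, hT, hr'⟩ := exists_isCap hw₂a hw₂b₂ hxb₂ h₂ h₂'
  exact hS.segment_subset_carrier hT (by nlinarith [mul_pos hr hr'])
    (hw₁a (right_mem_segment ℝ w₁ a)) (hxb₁ (left_mem_segment ℝ x b₁))

lemma segment_subset_carrier_of_mem_cone {s t : ℝ} (hs : 0 ≤ s) (ht : 0 ≤ t)
    (hx : x = a + s • (w₁ - a) + t • (w₂ - a))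
    (hw₁ : segment ℝ w₁ a ⊆ P.carrier ∧ segment ℝ w₁ b₁ ⊆ P.carrier ∧
      segment ℝ w₁ b₂ ⊆ P.carrier)
    (hw₂ : segment ℝ w₂ a ⊆ P.carrier ∧ segment ℝ w₂ b₁ ⊆ P.carrier ∧
      segment ℝ w₂ b₂ ⊆ P.carrier)
    (hxb₁ : segment ℝ x b₁ ⊆ P.carrier) (hxb₂ : segment ℝ x b₂ ⊆ P.carrier)
    (hb : cross (x - a) (b₁ - a) * cross (x - a) (b₂ - a) < 0)
    (h₁₁ : 0 ≤ cross (b₁ - a) (w₁ - a) * cross (b₁ - a) (x - a))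
    (h₁₂ : 0 ≤ cross (b₂ - a) (w₁ - a) * cross (b₂ - a) (x - a))
    (h₂₁ : 0 ≤ cross (b₁ - a) (w₂ - a) * cross (b₁ - a) (x - a))
    (h₂₂ : 0 ≤ cross (b₂ - a) (w₂ - a) * cross (b₂ - a) (x - a)) :
    segment ℝ a x ⊆ P.carrier := by
  have hY₁ : cross (x - a) (b₁ - a) ≠ 0 := left_ne_zero_of_mul hb.ne
  have online : ∀ w, segment ℝ w a ⊆ P.carrier ∧ segment ℝ w b₁ ⊆ P.carrier ∧
      segment ℝ w b₂ ⊆ P.carrier → 0 ≤ cross (b₁ - a) (w - a) * cross (b₁ - a) (x - a) →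
      cross (x - a) (w - a) = 0 → segment ℝ a x ⊆ P.carrier := by
    intro w hw hwx hX
    refine segment_subset_carrier_of_eq_smul ?_ (eq_smul_of_cross_eq_zero hX hY₁) hw.1 hw.2.1
      hw.2.2 hxb₁ hxb₂ hb
    rw [← mul_div_mul_right _ _ hY₁, cross_swap (w - a), cross_swap (x - a)]
    exact div_nonneg (by linarith) (mul_self_nonneg _)
  rcases eq_or_ne (cross (x - a) (w₁ - a)) 0 with hX₁ | hX₁
  · exact online w₁ hw₁ h₁₁ hX₁
  rcases eq_or_ne (cross (x - a) (w₂ - a)) 0 with hX₂ | hX₂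
  · exact online w₂ hw₂ h₂₁ hX₂
  have hX : s * cross (x - a) (w₁ - a) + t * cross (x - a) (w₂ - a) = 0 := by
    rw [← cross_smul_right, ← cross_smul_right, ← cross_add_right,
      show s • (w₁ - a) + t • (w₂ - a) = x - a by rw [hx]; abel, cross_self']
  -- `x ≠ a` lies in the cone spanned by `w₁ - a` and `w₂ - a`, so these straddle the line `a x`
  have hX₁₂ : cross (x - a) (w₁ - a) * cross (x - a) (w₂ - a) < 0 := by
    by_contra! h
    have hs0 : s = 0 := by
      have := congrArg (· * cross (x - a) (w₁ - a)) hX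
      nlinarith [mul_self_pos.2 hX₁, mul_nonneg ht h]
    have ht0 : t = 0 := by
      have := congrArg (· * cross (x - a) (w₂ - a)) hX
      nlinarith [mul_self_pos.2 hX₂, mul_nonneg hs h]
    exact hY₁ (by simp [hx, hs0, ht0, cross])
  rcases lt_or_gt_of_ne (mul_ne_zero hX₁ hY₁) with h | h
  · exact segment_subset_carrier_of_opposite_sides hw₂.1 hw₂.2.1 hw₁.1 hw₁.2.2 hxb₁ hxb₂
      (by nlinarith [mul_pos_of_neg_of_neg h hX₁₂, mul_self_nonneg (cross (x - a) (w₁ - a))])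
      (by nlinarith [mul_pos_of_neg_of_neg h hb, mul_self_nonneg (cross (x - a) (b₁ - a))])
      h₂₁ h₁₂ hb
  · exact segment_subset_carrier_of_opposite_sides hw₁.1 hw₁.2.1 hw₂.1 hw₂.2.2 hxb₁ hxb₂ h
      (by nlinarith [mul_pos_of_neg_of_neg hX₁₂ hb]) h₁₁ h₂₂ hb

/-- The closed wedge `U` at `a`, bounded by the lines `a b₁` and `a b₂`, that contains `v`. -/
def wedge (a b₁ b₂ v : ℝ × ℝ) : Set (ℝ × ℝ) :=
  {x | 0 ≤ cross (b₁ - a) (x - a) * cross (b₁ - a) (v - a) ∧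
    0 ≤ cross (b₂ - a) (x - a) * cross (b₂ - a) (v - a)}

lemma segment_subset_carrier_of_mem_wedge {v : ℝ × ℝ} {s t : ℝ}
    (hv₁ : cross (b₁ - a) (v - a) * cross (b₁ - a) (b₂ - a) < 0)
    (hv₂ : cross (b₂ - a) (v - a) * cross (b₂ - a) (b₁ - a) < 0)
    (hw₁U : w₁ ∈ wedge a b₁ b₂ v) (hw₂U : w₂ ∈ wedge a b₁ b₂ v) (hxU : x ∈ wedge a b₁ b₂ v)
    (hs : 0 ≤ s) (ht : 0 ≤ t) (hx : x = a + s • (w₁ - a) + t • (w₂ - a))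
    (hw₁ : segment ℝ w₁ a ⊆ P.carrier ∧ segment ℝ w₁ b₁ ⊆ P.carrier ∧
      segment ℝ w₁ b₂ ⊆ P.carrier)
    (hw₂ : segment ℝ w₂ a ⊆ P.carrier ∧ segment ℝ w₂ b₁ ⊆ P.carrier ∧
      segment ℝ w₂ b₂ ⊆ P.carrier)
    (hxb₁ : segment ℝ x b₁ ⊆ P.carrier) (hxb₂ : segment ℝ x b₂ ⊆ P.carrier) :
    segment ℝ a x ⊆ P.carrier := by
  have hV₁ := mul_self_pos.2 (left_ne_zero_of_mul hv₁.ne)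
  have hV₂ := mul_self_pos.2 (left_ne_zero_of_mul hv₂.ne)
  have hF₁₂ : cross (b₁ - a) (b₂ - a) ≠ 0 := right_ne_zero_of_mul hv₁.ne
  have hF₂₁ : cross (b₂ - a) (b₁ - a) ≠ 0 := right_ne_zero_of_mul hv₂.ne
  have hx₁ : cross (b₁ - a) (x - a) * cross (b₁ - a) (b₂ - a) ≤ 0 := by
    nlinarith [mul_nonpos_of_nonneg_of_nonpos hxU.1 hv₁.le]
  have hx₂ : cross (b₂ - a) (x - a) * cross (b₂ - a) (b₁ - a) ≤ 0 := by
    nlinarith [mul_nonpos_of_nonneg_of_nonpos hxU.2 hv₂.le]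
  rcases hx₁.eq_or_lt with hx₁ | hx₁
  · have ha := mem_segment_of_cross_eq_zero ((mul_eq_zero.1 hx₁).resolve_right hF₁₂) hx₂ hF₁₂
    rw [segment_symm]
    exact ((convex_segment x b₁).segment_subset (left_mem_segment ℝ x b₁) ha).trans hxb₁
  rcases hx₂.eq_or_lt with hx₂ | hx₂
  · have ha := mem_segment_of_cross_eq_zero ((mul_eq_zero.1 hx₂).resolve_right hF₂₁) hx₁.le hF₂₁
    rw [segment_symm]
    exact ((convex_segment x b₂).segment_subset (left_mem_segment ℝ x b₂) ha).trans hxb₂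
  have hxv₁ : 0 < cross (b₁ - a) (x - a) * cross (b₁ - a) (v - a) := by
    nlinarith [mul_pos_of_neg_of_neg hx₁ hv₁, mul_self_nonneg (cross (b₁ - a) (b₂ - a))]
  have hxv₂ : 0 < cross (b₂ - a) (x - a) * cross (b₂ - a) (v - a) := by
    nlinarith [mul_pos_of_neg_of_neg hx₂ hv₂, mul_self_nonneg (cross (b₂ - a) (b₁ - a))]
  refine segment_subset_carrier_of_mem_cone hs ht hx hw₁ hw₂ hxb₁ hxb₂ ?_ ?_ ?_ ?_ ?_
  · rw [cross_swap (x - a), cross_swap (x - a)]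
    rw [cross_swap (b₂ - a) (b₁ - a)] at hx₂
    nlinarith [mul_pos_of_neg_of_neg hx₁ hx₂, mul_self_pos.2 hF₁₂]
  · nlinarith [mul_nonneg hw₁U.1 hxv₁.le]
  · nlinarith [mul_nonneg hw₁U.2 hxv₂.le]
  · nlinarith [mul_nonneg hw₂U.1 hxv₁.le]
  · nlinarith [mul_nonneg hw₂U.2 hxv₂.le]

end Wedge

lemma exists_lt_of_mem_interior_convexHull {E : Type*} [NormedAddCommGroup E] [NormedSpace ℝ E]
    {s : Set E} {a : E} (f : E →L[ℝ] ℝ) (hf : f ≠ 0) (ha : a ∈ interior (convexHull ℝ s)) :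
    ∃ z ∈ s, f z < f a := by
  by_contra! h
  have hmin : IsLocalMin f a := mem_of_superset (mem_interior_iff_mem_nhds.1 ha)
    (convexHull_min h (convex_halfSpace_ge (f : E →ₗ[ℝ] ℝ).isLinear (f a)))
  exact hf (hmin.hasFDerivAt_eq_zero f.hasFDerivAt)

lemma cross_mul_cross_neg_of_mem_interior_convexHull {a v b b' : ℝ × ℝ}
    (ha : a ∈ interior (convexHull ℝ {v, b, b'})) (hb : b ≠ a) :
    cross (b - a) (v - a) * cross (b - a) (b' - a) < 0 := by
  set u := b - a
  let f : ℝ × ℝ →L[ℝ] ℝ :=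
    u.1 • ContinuousLinearMap.snd ℝ ℝ ℝ - u.2 • ContinuousLinearMap.fst ℝ ℝ ℝ
  have hf : ∀ z, f z - f a = cross u (z - a) := fun z => by
    simp only [f, sub_apply, smul_apply, ContinuousLinearMap.coe_snd',
      ContinuousLinearMap.coe_fst', smul_eq_mul, cross, Prod.snd_sub, Prod.fst_sub]
    ring
  have hf0 : f ≠ 0 := by
    intro h0
    have h := hf (a + (-u.2, u.1))
    simp only [h0, zero_apply, sub_self, cross, add_sub_cancel_left, mul_neg,
      sub_neg_eq_add] at h
    have hu₁ : u.1 = 0 := by nlinarith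
    have hu₂ : u.2 = 0 := by nlinarith
    exact sub_ne_zero.2 hb (Prod.ext hu₁ hu₂)
  obtain ⟨z, hz, hlt⟩ := exists_lt_of_mem_interior_convexHull f hf0 ha
  obtain ⟨z', hz', hlt'⟩ := exists_lt_of_mem_interior_convexHull (-f) (neg_ne_zero.2 hf0) ha
  have hz₁ : cross u (z - a) < 0 := by rw [← hf]; exact sub_neg.2 hlt
  have hz₂ : 0 < cross u (z' - a) := by rw [← hf]; exact sub_pos.2 (neg_lt_neg_iff.1 hlt')
  simp only [mem_insert_iff, mem_singleton_iff] at hz hz'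
  rcases hz with rfl | rfl | rfl <;> rcases hz' with rfl | rfl | rfl <;>
    simp only [u, cross_self'] at hz₁ hz₂ <;> nlinarith

theorem stmt12_general (P : SimplePolygon) (a b₁ b₂ v w₁ w₂ : ℝ × ℝ)
    (hvb₁ : segment ℝ v b₁ ⊆ P.carrier) (hvb₂ : segment ℝ v b₂ ⊆ P.carrier)
    (hva : ¬ segment ℝ v a ⊆ P.carrier)
    (hat : a ∈ interior (convexHull ℝ ({v, b₁, b₂} : Set (ℝ × ℝ))))
    (hw₁ : segment ℝ w₁ a ⊆ P.carrier ∧ segment ℝ w₁ b₁ ⊆ P.carrier ∧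
           segment ℝ w₁ b₂ ⊆ P.carrier)
    (hw₂ : segment ℝ w₂ a ⊆ P.carrier ∧ segment ℝ w₂ b₁ ⊆ P.carrier ∧
           segment ℝ w₂ b₂ ⊆ P.carrier)
    (W : Set (ℝ × ℝ))
    (hW : W = {x : ℝ × ℝ | ∃ s t : ℝ, 0 ≤ s ∧ 0 ≤ t ∧ x = a + s • (w₁ - a) + t • (w₂ - a)})
    (hWU : W ⊆ {x : ℝ × ℝ | 0 ≤ cross (b₁ - a) (x - a) * cross (b₁ - a) (v - a) ∧
                            0 ≤ cross (b₂ - a) (x - a) * cross (b₂ - a) (v - a)})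
    (hWall : ∀ z ∈ P.carrier, segment ℝ z a ⊆ P.carrier → segment ℝ z b₁ ⊆ P.carrier →
      segment ℝ z b₂ ⊆ P.carrier → z ∈ W) :
    ∀ v' ∈ P.carrier, segment ℝ v' b₁ ⊆ P.carrier → segment ℝ v' b₂ ⊆ P.carrier →
      (segment ℝ v' a ⊆ P.carrier ↔ v' ∈ W) := by
  intro v' hv' hv'b₁ hv'b₂
  refine ⟨fun hv'a => hWall v' hv' hv'a hv'b₁ hv'b₂, fun hv'W => ?_⟩
  have hb₁a : b₁ ≠ a := by rintro rfl; exact hva hvb₁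
  have hb₂a : b₂ ≠ a := by rintro rfl; exact hva hvb₂
  have hwU : ∀ s t : ℝ, 0 ≤ s → 0 ≤ t → a + s • (w₁ - a) + t • (w₂ - a) ∈ wedge a b₁ b₂ v :=
    fun s t hs ht => hWU (hW ▸ ⟨s, t, hs, ht, rfl⟩)
  obtain ⟨s, t, hs, ht, hv'st⟩ := hW ▸ hv'W
  rw [segment_symm]
  exact segment_subset_carrier_of_mem_wedge
    (cross_mul_cross_neg_of_mem_interior_convexHull hat hb₁a)
    (cross_mul_cross_neg_of_mem_interior_convexHull (pair_comm b₁ b₂ ▸ hat) hb₂a)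
    (by simpa using hwU 1 0 zero_le_one le_rfl) (by simpa using hwU 0 1 le_rfl zero_le_one)
    (hWU hv'W) hs ht hv'st hw₁ hw₂ hv'b₁ hv'b₂

/-- Restriction to a sub-wedge: with `a, b₁, b₂, v` as in the wedge confinement lemma,
let `w₁, w₂ ∈ P` see `a, b₁, b₂`, and let `W` be the closed wedge with apex `a` bounded
by the rays from `a` through `w₁` and `w₂`; suppose `W` lies in the wedge `U` and
contains every point of `P` that sees `a`, `b₁` and `b₂`. Then a point `v' ∈ P` that
sees `b₁` and `b₂` sees `a` if and only if `v' ∈ W`. -/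
theorem stmt12 (P : SimplePolygon) (a b₁ b₂ v w₁ w₂ : ℝ × ℝ)
    (ha : a ∈ P.carrier) (hb₁ : b₁ ∈ P.carrier) (hb₂ : b₂ ∈ P.carrier) (hv : v ∈ P.carrier)
    (hvb₁ : segment ℝ v b₁ ⊆ P.carrier) (hvb₂ : segment ℝ v b₂ ⊆ P.carrier)
    (hva : ¬ segment ℝ v a ⊆ P.carrier)
    (hat : a ∈ interior (convexHull ℝ ({v, b₁, b₂} : Set (ℝ × ℝ))))
    (hw₁P : w₁ ∈ P.carrier) (hw₂P : w₂ ∈ P.carrier)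
    (hw₁ : segment ℝ w₁ a ⊆ P.carrier ∧ segment ℝ w₁ b₁ ⊆ P.carrier ∧
           segment ℝ w₁ b₂ ⊆ P.carrier)
    (hw₂ : segment ℝ w₂ a ⊆ P.carrier ∧ segment ℝ w₂ b₁ ⊆ P.carrier ∧
           segment ℝ w₂ b₂ ⊆ P.carrier)
    (W : Set (ℝ × ℝ))
    (hW : W = {x : ℝ × ℝ | ∃ s t : ℝ, 0 ≤ s ∧ 0 ≤ t ∧ x = a + s • (w₁ - a) + t • (w₂ - a)})
    (hWU : W ⊆ {x : ℝ × ℝ | 0 ≤ cross (b₁ - a) (x - a) * cross (b₁ - a) (v - a) ∧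
                            0 ≤ cross (b₂ - a) (x - a) * cross (b₂ - a) (v - a)})
    (hWall : ∀ z ∈ P.carrier, segment ℝ z a ⊆ P.carrier → segment ℝ z b₁ ⊆ P.carrier →
      segment ℝ z b₂ ⊆ P.carrier → z ∈ W) :
    ∀ v' ∈ P.carrier, segment ℝ v' b₁ ⊆ P.carrier → segment ℝ v' b₂ ⊆ P.carrier →
      (segment ℝ v' a ⊆ P.carrier ↔ v' ∈ W) :=
  stmt12_general P a b₁ b₂ v w₁ w₂ hvb₁ hvb₂ hva hat hw₁ hw₂ W hW hWU hWall
end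

section
/- If the VC-dimension bound for wedges holds (no 6 wedges shattered by points) and the wedge-restriction property holds for each of k ≥ 6 interior points with respect to a common pair of hull vertices, then at most 5 points of a shattered set S in a simple polygon can lie strictly inside the convex hull of S. -/
/-- A wedge: the intersection of two closed half-planes whose boundary lines meet
in a single point (the apex). Equivalently, the convex cone with apex `apex`
spanned by the two linearly independent directions `dir₁`, `dir₂`. -/
structure Wedge where
  apex : ℝ × ℝ
  dir₁ : ℝ × ℝ
  dir₂ : ℝ × ℝ
  indep : dir₁.1 * dir₂.2 - dir₁.2 * dir₂.1 ≠ 0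

/-- The region covered by a wedge. -/
def Wedge.carrier (w : Wedge) : Set (ℝ × ℝ) :=
  {x | ∃ s t : ℝ, 0 ≤ s ∧ 0 ≤ t ∧ x = w.apex + s • w.dir₁ + t • w.dir₂}

/-- The two boundary half-lines (rays) of a wedge, emanating from the apex. -/
def Wedge.ray (w : Wedge) (b : Bool) : Set (ℝ × ℝ) :=
  {x | ∃ s : ℝ, 0 ≤ s ∧ x = w.apex + s • (if b then w.dir₁ else w.dir₂)}

/-- The boundary of a wedge: the union of its two rays. -/
def Wedge.bdry (w : Wedge) : Set (ℝ × ℝ) := w.ray true ∪ w.ray false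


/-!
Take six interior points `a₀, …, a₅` and their wedges `Wᵢ`. For any `T ⊆ {0, …, 5}`, a view
point `v` discerning the subset `(S \ A) ∪ {aᵢ | i ∈ T}` sees every hull vertex, so it lies in
the region where visibility of `aᵢ` coincides with membership in `Wᵢ`; by symmetry of
visibility, `v ∈ Wᵢ ↔ i ∈ T`. Hence the six wedges would be shattered.
-/

def IsShattered {α ι : Type*} (C : ι → Set α) : Prop :=
  ∀ T : Set ι, ∃ x, {i | x ∈ C i} = T

/-- The region `V_B` of the paper. -/
def commonViewers (P : SimplePolygon) (B : Finset (ℝ × ℝ)) : Set (ℝ × ℝ) :=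
  {u ∈ P.carrier | ∀ b ∈ B, segment ℝ u b ⊆ P.carrier}

lemma mem_vis_iff_segment_subset {P : SimplePolygon} {x v : ℝ × ℝ} :
    x ∈ vis P v ↔ segment ℝ x v ⊆ P.carrier :=
  ⟨And.right, fun h => ⟨h (left_mem_segment ℝ x v), h⟩⟩

lemma mem_vis_comm {P : SimplePolygon} {x v : ℝ × ℝ} : x ∈ vis P v ↔ v ∈ vis P x := by
  rw [mem_vis_iff_segment_subset, mem_vis_iff_segment_subset, segment_symm]

lemma mem_commonViewers_of_subset_vis {P : SimplePolygon} {B : Finset (ℝ × ℝ)} {v : ℝ × ℝ}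
    (hv : v ∈ P.carrier) (hB : (B : Set (ℝ × ℝ)) ⊆ vis P v) : v ∈ commonViewers P B :=
  ⟨hv, fun _ hb => mem_vis_comm.1 (hB hb) |>.2⟩

theorem isShattered_of_vis_eq_on_commonViewers {ι : Type*} {P : SimplePolygon}
    {S B : Finset (ℝ × ℝ)}
    (hshatter : ∀ T ⊆ S, ∃ v ∈ P.carrier, vis P v ∩ (S : Set (ℝ × ℝ)) = (T : Set (ℝ × ℝ)))
    (hBS : B ⊆ S) {a : ι → ℝ × ℝ} (ha : Function.Injective a) (haS : ∀ i, a i ∈ S)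
    (haB : ∀ i, a i ∉ B) {W : ι → Set (ℝ × ℝ)}
    (hW : ∀ i, commonViewers P B ∩ vis P (a i) = commonViewers P B ∩ W i) :
    IsShattered W := by
  classical
  intro T
  obtain ⟨v, hvP, hv⟩ := hshatter (S.filter fun p => p ∈ B ∨ ∃ i ∈ T, a i = p)
    (Finset.filter_subset _ _)
  have mem_vis_iff {p} (hp : p ∈ S) : p ∈ vis P v ↔ p ∈ B ∨ ∃ i ∈ T, a i = p := by
    simpa [hp] using Set.ext_iff.1 hv p
  have hvB : v ∈ commonViewers P B :=
    mem_commonViewers_of_subset_vis hvP fun b hb => (mem_vis_iff (hBS hb)).2 (Or.inl hb)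
  refine ⟨v, Set.ext fun i => ?_⟩
  calc v ∈ W i ↔ v ∈ vis P (a i) := by
        simpa [hvB] using (congrArg (v ∈ ·) (hW i)).symm
    _ ↔ a i ∈ vis P v := mem_vis_comm.symm
    _ ↔ i ∈ T := by simp [mem_vis_iff (haS i), haB i, ha.eq_iff]

theorem stmt13_general (P : SimplePolygon) (S : Finset (ℝ × ℝ))
    (hshatter : ∀ T ⊆ S, ∃ v ∈ P.carrier, vis P v ∩ (S : Set (ℝ × ℝ)) = (T : Set (ℝ × ℝ)))
    (A : Finset (ℝ × ℝ))
    (hA : ∀ p, p ∈ A ↔ p ∈ S ∧ p ∈ interior (convexHull ℝ (S : Set (ℝ × ℝ))))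
    (hwedge : ∀ a ∈ A, ∃ w : Wedge,
      {u ∈ P.carrier | ∀ b ∈ S \ A, segment ℝ u b ⊆ P.carrier} ∩ vis P a =
      {u ∈ P.carrier | ∀ b ∈ S \ A, segment ℝ u b ⊆ P.carrier} ∩ w.carrier)
    (hVC : ∀ w : Fin 6 → Wedge,
      ∃ T : Set (Fin 6), ¬ ∃ x : ℝ × ℝ, {i : Fin 6 | x ∈ (w i).carrier} = T) :
    A.card ≤ 5 := by
  by_contra! hcard
  let e : Fin 6 ↪ A := (Fin.castLEEmb hcard).trans A.equivFin.symm.toEmbedding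
  choose w hw using fun i => hwedge (e i) (e i).2
  obtain ⟨T, hT⟩ := hVC w
  have haS : ∀ i, (e i : ℝ × ℝ) ∈ S := fun i => ((hA _).1 (e i).2).1
  exact hT <| isShattered_of_vis_eq_on_commonViewers hshatter Finset.sdiff_subset
    (Subtype.val_injective.comp e.injective) haS
    (fun i h => (Finset.mem_sdiff.1 h).2 (e i).2) hw T

/-- If no 6 wedges can be shattered by points, and for every interior point `a` of a
shattered set `S` the visibility region of `a`, restricted to the view points seeing all
hull vertices of `S`, coincides with a wedge, then at most 5 points of `S` lie strictly
inside the convex hull of `S`. -/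
theorem stmt13 (P : SimplePolygon) (S : Finset (ℝ × ℝ)) (hSP : (S : Set (ℝ × ℝ)) ⊆ P.carrier)
    (hshatter : ∀ T ⊆ S, ∃ v ∈ P.carrier, vis P v ∩ (S : Set (ℝ × ℝ)) = (T : Set (ℝ × ℝ)))
    (A : Finset (ℝ × ℝ))
    (hA : ∀ p, p ∈ A ↔ p ∈ S ∧ p ∈ interior (convexHull ℝ (S : Set (ℝ × ℝ))))
    (hwedge : ∀ a ∈ A, ∃ w : Wedge,
      {u ∈ P.carrier | ∀ b ∈ S \ A, segment ℝ u b ⊆ P.carrier} ∩ vis P a =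
      {u ∈ P.carrier | ∀ b ∈ S \ A, segment ℝ u b ⊆ P.carrier} ∩ w.carrier)
    (hVC : ∀ w : Fin 6 → Wedge,
      ∃ T : Set (Fin 6), ¬ ∃ x : ℝ × ℝ, {i : Fin 6 | x ∈ (w i).carrier} = T) :
    A.card ≤ 5 :=
  stmt13_general P S hshatter A hA hwedge hVC
end

section
/- Convexity order lemma: let v be a point outside the convex hull of a finite planar point set S in convex position, and let the back points of S with respect to v be those not strictly between the two tangent points as seen from v. Then the angular order around v in which a ray rotating about v encounters the back points coincides with their cyclic order along the boundary of the convex hull. -/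
/-!
If `p, q, r` were not counterclockwise, the ray from `v` through `q` would cross the segment `pr`
at `q` or beyond it. Since `q` is a back point and the angular hypotheses rule out the two tangent
alternatives, the segment from `v` to `q` meets the hull at a point other than `q`. Either way `q`
lies in an open segment between two hull points different from `q`, which is impossible for a
vertex of the hull.
-/

open Set

section

variable {𝕜 E : Type*} [Field 𝕜] [LinearOrder 𝕜] [IsStrictOrderedRing 𝕜]
  [AddCommGroup E] [Module 𝕜 E]

theorem add_smul_mem_openSegment (v b : E) {s u t : 𝕜} (hsu : s < u) (hut : u < t) :
    v + u • b ∈ openSegment 𝕜 (v + s • b) (v + t • b) := by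
  have h := image_openSegment 𝕜 (AffineMap.lineMap v (v + b)) s t
  rw [openSegment_eq_Ioo (hsu.trans hut)] at h
  have hu := h ▸ mem_image_of_mem (AffineMap.lineMap v (v + b))
    (show u ∈ Ioo s t from ⟨hsu, hut⟩)
  simpa [AffineMap.lineMap_apply, add_comm] using hu

theorem mem_extremePoints_convexHull_insert {s : Set E} {x : E} (hx : x ∉ convexHull 𝕜 s) :
    x ∈ (convexHull 𝕜 (insert x s)).extremePoints 𝕜 := by
  rcases s.eq_empty_or_nonempty with rfl | hs
  · simp
  rw [mem_extremePoints_iff_left]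
  refine ⟨subset_convexHull 𝕜 _ (mem_insert _ _), ?_⟩
  rw [convexHull_insert hs]
  rintro y hy z hz ⟨m, n, hm, hn, hmn, hxyz⟩
  obtain ⟨_, hxy, c, hc, hy⟩ := mem_convexJoin.1 hy
  obtain ⟨_, hxz, d, hd, hz⟩ := mem_convexJoin.1 hz
  rw [mem_singleton_iff.1 hxy, segment_eq_image'] at hy
  rw [mem_singleton_iff.1 hxz, segment_eq_image'] at hz
  obtain ⟨α, ⟨hα, -⟩, rfl⟩ := hy
  obtain ⟨β, ⟨hβ, -⟩, rfl⟩ := hz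
  beta_reduce at hxyz ⊢
  by_contra hyx
  have hα : 0 < α := hα.lt_of_ne (by rintro rfl; simp at hyx)
  have hw : 0 < m * α + n * β := by positivity
  have hcomb : (m * α + n * β) • x = (m * α) • c + (n * β) • d := by
    linear_combination (norm := module) -hxyz + hmn • x
  refine hx ?_
  convert (convex_convexHull 𝕜 s) hc hd (div_nonneg (by positivity) hw.le : 0 ≤ m * α / _)
    (div_nonneg (by positivity) hw.le : 0 ≤ n * β / _) (by field_simp) using 1
  apply smul_right_injective E hw.ne'
  simp only [hcomb, smul_add, smul_smul]
  field_simp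

end

lemma cross_swap_s17 (p q : ℝ × ℝ) : cross q p = -cross p q := by
  simp only [cross]; ring

lemma cross_smul_add_cross_smul (a b c : ℝ × ℝ) :
    cross b c • a + cross a b • c = cross a c • b := by
  ext <;> simp only [cross, Prod.fst_add, Prod.snd_add, Prod.smul_fst, Prod.smul_snd,
    smul_eq_mul] <;> ring

lemma smul_mem_openSegment_of_cross_pos {a b c : ℝ × ℝ} (hab : 0 < cross a b)
    (hbc : 0 < cross b c) :
    (cross a c / (cross a b + cross b c)) • b ∈ openSegment ℝ a c := by
  have hD : 0 < cross a b + cross b c := add_pos hab hbc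
  refine ⟨cross b c / (cross a b + cross b c), cross a b / (cross a b + cross b c),
    div_pos hbc hD, div_pos hab hD, by field_simp; ring, ?_⟩
  simp only [div_eq_inv_mul, mul_smul, ← smul_add, cross_smul_add_cross_smul]

lemma cross_sub_pos_of_mem_extremePoints {K : Set (ℝ × ℝ)} (hK : Convex ℝ K)
    {v p q r x : ℝ × ℝ} (hq : q ∈ K.extremePoints ℝ) (hp : p ∈ K) (hr : r ∈ K) (hpq : p ≠ q)
    (hx : x ∈ segment ℝ v q) (hxK : x ∈ K) (hxq : x ≠ q)
    (hpvq : 0 < cross (p - v) (q - v)) (hqvr : 0 < cross (q - v) (r - v)) :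
    0 < cross (q - p) (r - p) := by
  set D := cross (p - v) (q - v) + cross (q - v) (r - v)
  set k := cross (p - v) (r - v) / D
  have hD : 0 < D := add_pos hpvq hqvr
  have hy : v + k • (q - v) ∈ openSegment ℝ p r := by
    simpa using (mem_openSegment_translate ℝ v).2 (smul_mem_openSegment_of_cross_pos hpvq hqvr)
  have hcross : cross (q - p) (r - p) = D * (1 - k) := by
    rw [mul_one_sub, show D * k = cross (p - v) (r - v) from mul_div_cancel₀ _ hD.ne']
    simp only [D, cross, Prod.fst_sub, Prod.snd_sub]; ring
  rw [hcross]
  refine mul_pos hD (sub_pos.2 (not_le.1 fun hk => ?_))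
  rw [segment_eq_image'] at hx
  obtain ⟨t, ⟨-, ht⟩, rfl⟩ := hx
  have ht : t < 1 := ht.lt_of_ne (by rintro rfl; simp at hxq)
  rcases hk.eq_or_lt with hk | hk
  · rw [← hk, one_smul, add_sub_cancel] at hy
    exact hpq (hq.2 hp hr hy)
  · have hyK : v + k • (q - v) ∈ K := hK.openSegment_subset hp hr hy
    exact hxq (hq.2 hxK hyK (by simpa using add_smul_mem_openSegment v (q - v) ht hk))

theorem stmt17_general (S : Finset (ℝ × ℝ)) (v : ℝ × ℝ)
    (hconv : ∀ p ∈ S, p ∉ convexHull ℝ ((S : Set (ℝ × ℝ)) \ {p}))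
    (back : ℝ × ℝ → Prop)
    (hback : ∀ p, back p ↔ p ∈ S ∧
      (¬ (segment ℝ v p ∩ convexHull ℝ (S : Set (ℝ × ℝ)) ⊆ {p}) ∨
        (∀ q ∈ S, 0 ≤ cross (p - v) (q - v)) ∨
        (∀ q ∈ S, cross (p - v) (q - v) ≤ 0))) :
    ∀ p q r : ℝ × ℝ, back p → back q → back r → p ≠ q → q ≠ r → p ≠ r →
      0 < cross (p - v) (q - v) → 0 < cross (q - v) (r - v) →
      0 < cross (q - p) (r - p) := by
  intro p q r hp hq hr hpq _ _ hpvq hqvr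
  obtain ⟨hpS, -⟩ := (hback p).1 hp
  obtain ⟨hqS, hq⟩ := (hback q).1 hq
  obtain ⟨hrS, -⟩ := (hback r).1 hr
  rcases hq with hseg | hleft | hright
  · obtain ⟨x, ⟨hx, hxK⟩, hxq⟩ := Set.not_subset.1 hseg
    have hqext : q ∈ (convexHull ℝ (S : Set (ℝ × ℝ))).extremePoints ℝ := by
      simpa [Set.insert_eq_of_mem (Finset.mem_coe.2 hqS)] using
        mem_extremePoints_convexHull_insert (hconv q hqS)
    exact cross_sub_pos_of_mem_extremePoints (convex_convexHull ℝ _) hqext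
      (subset_convexHull ℝ _ hpS) (subset_convexHull ℝ _ hrS) hpq hx hxK hxq hpvq hqvr
  · linarith [hleft p hpS, cross_swap_s17 (p - v) (q - v)]
  · linarith [hright r hrS]

/-- Convexity order lemma: for a finite set `S` in convex position and a view point `v`
outside its convex hull, the back points of `S` (points of the far arc, together with
the tangent points) are encountered by a ray rotating about `v` in the same order in
which they appear along the boundary of the convex hull: three back points in
counterclockwise angular order around `v` are in counterclockwise order on the hull. -/
theorem stmt17 (S : Finset (ℝ × ℝ)) (v : ℝ × ℝ)
    (hconv : ∀ p ∈ S, p ∉ convexHull ℝ ((S : Set (ℝ × ℝ)) \ {p}))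
    (hv : v ∉ convexHull ℝ (S : Set (ℝ × ℝ)))
    (back : ℝ × ℝ → Prop)
    (hback : ∀ p, back p ↔ p ∈ S ∧
      (¬ (segment ℝ v p ∩ convexHull ℝ (S : Set (ℝ × ℝ)) ⊆ {p}) ∨
        (∀ q ∈ S, 0 ≤ cross (p - v) (q - v)) ∨
        (∀ q ∈ S, cross (p - v) (q - v) ≤ 0))) :
    ∀ p q r : ℝ × ℝ, back p → back q → back r → p ≠ q → q ≠ r → p ≠ r →
      0 < cross (p - v) (q - v) → 0 < cross (q - v) (r - v) →
      0 < cross (q - p) (r - p) :=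
  stmt17_general S v hconv back hback
end
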